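/- arXiv:1611.00444 — 4 statements merged into one kernel-verified Lean document; each statement's English description precedes it below -/
import Mathlib

section
/- Let A be a bounded normal operator on a nontrivial complex Hilbert space H with 0 ∈ spectrum(A). If 0 is an isolated point of the spectrum of A, then the range of A is closed. -/
/-!
If `0` is isolated in the spectrum of a normal operator `A`, then `z ↦ z⁻¹` (with `0⁻¹ = 0`) is
continuous on the spectrum, so `B := cfc (·⁻¹) A` is defined. Since `z * z⁻¹ * z = z` for every
`z`, we get `A * B * A = A`, and the range of `A` is the fixed-point set of the continuous map
`A * B`, which is closed.
-/

open Filter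

theorem not_accPt_zero_of_forall_le_norm {E : Type*} [SeminormedAddCommGroup E] {s : Set E}
    {γ : ℝ} (hγ : 0 < γ) (hs : ∀ z ∈ s, z ≠ 0 → γ ≤ ‖z‖) : ¬AccPt (0 : E) (𝓟 s) := by
  rw [accPt_iff_nhds]
  push Not
  refine ⟨Metric.ball 0 γ, Metric.ball_mem_nhds 0 hγ, fun z ⟨hzγ, hzs⟩ => ?_⟩
  by_contra hz
  exact (hs z hzs hz).not_gt (mem_ball_zero_iff.mp hzγ)

theorem continuousOn_inv₀_of_not_accPt_zero {𝕜 : Type*} [NormedDivisionRing 𝕜] {s : Set 𝕜}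
    (hs : ¬AccPt (0 : 𝕜) (𝓟 s)) : ContinuousOn (·⁻¹) s := by
  intro z _
  rcases eq_or_ne z 0 with rfl | hz
  · exact continuousWithinAt_of_not_accPt hs
  · exact (continuousAt_inv₀ hz).continuousWithinAt

theorem mul_cfc_inv_mul_self {𝕜 A : Type*} {p : A → Prop} [RCLike 𝕜] [Ring A] [StarRing A]
    [Algebra 𝕜 A] [TopologicalSpace A] [ContinuousFunctionalCalculus 𝕜 A p] (a : A)
    (hinv : ContinuousOn (·⁻¹) (spectrum 𝕜 a)) (ha : p a := by cfc_tac) :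
    a * cfc (·⁻¹ : 𝕜 → 𝕜) a * a = a := by
  calc a * cfc (·⁻¹) a * a = cfc (fun z : 𝕜 => z * z⁻¹ * z) a := by
        rw [cfc_mul (fun z => z * z⁻¹) _ a ((continuousOn_id' _).mul hinv) (continuousOn_id' _),
          cfc_mul _ _ a (continuousOn_id' _) hinv, cfc_id' 𝕜 a]
    _ = a := by simp only [mul_inv_mul_cancel, cfc_id' 𝕜 a]

theorem ContinuousLinearMap.isClosed_range_of_comp_comp_self {R E F : Type*} [Semiring R]
    [AddCommMonoid E] [TopologicalSpace E] [Module R E]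
    [AddCommMonoid F] [TopologicalSpace F] [T2Space F] [Module R F]
    {A : E →L[R] F} {B : F →L[R] E} (h : A ∘L B ∘L A = A) : IsClosed (Set.range A) := by
  have hrange : Set.range A = {y | A (B y) = y} := by
    ext y
    refine ⟨?_, fun hy => ⟨B y, hy⟩⟩
    rintro ⟨x, rfl⟩
    exact congr($h x)
  rw [hrange]
  exact isClosed_eq (A.continuous.comp B.continuous) continuous_id

theorem range_closed_of_isolated_zero_of_normal_general
    {H : Type*} [NormedAddCommGroup H] [InnerProductSpace ℂ H] [CompleteSpace H]
    (A : H →L[ℂ] H)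
    (hA : ContinuousLinearMap.adjoint A * A = A * ContinuousLinearMap.adjoint A)
    (hiso : ∃ γ > (0 : ℝ), ∀ lam ∈ spectrum ℂ A, lam ≠ 0 → γ ≤ ‖lam‖) :
    IsClosed (Set.range ⇑A) := by
  obtain ⟨γ, hγ, hgap⟩ := hiso
  have : IsStarNormal A := ⟨by rwa [ContinuousLinearMap.star_eq_adjoint]⟩
  have hinv := continuousOn_inv₀_of_not_accPt_zero (not_accPt_zero_of_forall_le_norm hγ hgap)
  exact ContinuousLinearMap.isClosed_range_of_comp_comp_self (mul_cfc_inv_mul_self A hinv)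

theorem range_closed_of_isolated_zero_of_normal
    {H : Type*} [NormedAddCommGroup H] [InnerProductSpace ℂ H] [CompleteSpace H]
    [Nontrivial H]
    (A : H →L[ℂ] H)
    (hA : ContinuousLinearMap.adjoint A * A = A * ContinuousLinearMap.adjoint A)
    (h0 : (0 : ℂ) ∈ spectrum ℂ A)
    (hiso : ∃ γ > (0 : ℝ), ∀ lam ∈ spectrum ℂ A, lam ≠ 0 → γ ≤ ‖lam‖) :
    IsClosed (Set.range ⇑A) :=
  range_closed_of_isolated_zero_of_normal_general A hA hiso
end

section
/- Let A be a closed densely defined linear operator on a complex Banach space X such that X = ker A ⊕ range A (direct sum of closed subspaces) and let P be the projection onto ker A along range A. Then A + P, with domain D(A), is bijective from D(A) onto X and has a bounded inverse. -/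
/-!
Since `P` projects onto `ker A` along `range A`, the equation `A x + P x = y` splits into
`A x = y - P y` and `P x = P y`: the first is solved up to an element of `ker A`, which then
adjusts the second, and for `y = 0` it forces `A x = P x = 0`, i.e. `x ∈ ker A ∩ range A = 0`.
As a bounded perturbation of a closed operator, `A + P` is closed, so the open mapping theorem
on its graph, a Banach space, bounds the inverse.
-/

namespace LinearPMap

section Algebra

variable {R E : Type*} [Ring R] [AddCommGroup E] [Module R E]
  {A : E →ₗ.[R] E} {P : E →ₗ[R] E}

theorem injective_vadd_of_isIdempotentElem (hP : IsIdempotentElem P)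
    (hker : A.toFun.ker.map A.domain.subtype ≤ P.range) (hran : A.toFun.range ≤ P.ker) :
    Function.Injective (P +ᵥ A).toFun := by
  rw [← LinearMap.ker_eq_bot, LinearMap.ker_eq_bot']
  intro x hx
  have hAx : A x = -P x := eq_neg_of_add_eq_zero_right hx
  have hPx : P x = 0 := by
    have hPAx : P (A x) = 0 := hran ⟨x, rfl⟩
    simpa [hAx, ← Module.End.mul_apply, hP.eq] using hPAx
  have hxN : (x : E) ∈ P.range := hker ⟨x, by simpa [hPx] using hAx, rfl⟩
  exact Subtype.ext <| ((LinearMap.IsIdempotentElem.mem_range_iff hP).mp hxN).symm.trans hPx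

theorem surjective_vadd_of_isIdempotentElem (hP : IsIdempotentElem P)
    (hker : P.range ≤ A.toFun.ker.map A.domain.subtype) (hran : P.ker ≤ A.toFun.range) :
    Function.Surjective (P +ᵥ A).toFun := by
  have hPP (y : E) : P (P y) = P y := by rw [← Module.End.mul_apply, hP.eq]
  intro y
  obtain ⟨z, hz⟩ : y - P y ∈ A.toFun.range := hran (by simp [hPP])
  obtain ⟨u, huker, hu⟩ := hker ⟨z, rfl⟩
  obtain ⟨w, hwker, hw⟩ := hker ⟨y, rfl⟩
  refine ⟨z - u + w, ?_⟩
  have hAu : A u = 0 := huker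
  have hAw : A w = 0 := hwker
  have hAz : A z = y - P y := hz
  simp only [Submodule.subtype_apply] at hu hw
  change P ((z - u + w : A.domain) : E) + A (z - u + w) = y
  rw [A.map_add, A.map_sub, Submodule.coe_add, Submodule.coe_sub, P.map_add, P.map_sub, hu, hw,
    hPP, hPP, hAu, hAw, hAz]
  abel

end Algebra

section Topology

variable {𝕜 E F : Type*} [NontriviallyNormedField 𝕜]
  [NormedAddCommGroup E] [NormedSpace 𝕜 E] [NormedAddCommGroup F] [NormedSpace 𝕜 F]

theorem IsClosed.vadd {A : E →ₗ.[𝕜] F} (hA : A.IsClosed) (B : E →L[𝕜] F) :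
    ((B : E →ₗ[𝕜] F) +ᵥ A).IsClosed := by
  let L : E × F →L[𝕜] E × F :=
    .id 𝕜 (E × F) - (ContinuousLinearMap.inr 𝕜 E F).comp (B.comp (.fst 𝕜 E F))
  have hgraph : ((B : E →ₗ[𝕜] F) +ᵥ A).graph = A.graph.comap (L : E × F →ₗ[𝕜] E × F) := by
    ext ⟨x, y⟩
    simp [mem_graph_iff, L, eq_sub_iff_add_eq']
  rw [LinearPMap.IsClosed, hgraph, Submodule.comap_coe]
  exact hA.preimage L.continuous

theorem IsClosed.exists_norm_le_of_bijective [CompleteSpace E] [CompleteSpace F]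
    {A : E →ₗ.[𝕜] F} (hA : A.IsClosed) (hbij : Function.Bijective A.toFun) :
    ∃ C > 0, ∀ x : A.domain, ‖(x : E)‖ ≤ C * ‖A x‖ := by
  have : CompleteSpace A.graph := hA.completeSpace_coe
  let T : A.graph →L[𝕜] F := (ContinuousLinearMap.snd 𝕜 E F).comp A.graph.subtypeL
  have hT : Function.Surjective T := fun y ↦
    let ⟨x, hx⟩ := hbij.2 y
    ⟨⟨_, A.mem_graph x⟩, hx⟩
  obtain ⟨C, hC, hpre⟩ := T.exists_preimage_norm_le hT
  refine ⟨C, hC, fun x ↦ ?_⟩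
  obtain ⟨⟨⟨a, b⟩, hg⟩, hTg, hnorm⟩ := hpre (A x)
  obtain ⟨d, rfl, rfl⟩ := A.mem_graph_iff.mp hg
  obtain rfl : d = x := hbij.1 hTg
  exact (norm_fst_le _).trans hnorm

end Topology

end LinearPMap

open LinearPMap in
theorem reducibly_invertible_of_ker_range_compl_general
    {X : Type*} [NormedAddCommGroup X] [NormedSpace ℂ X] [CompleteSpace X]
    (A : X →ₗ.[ℂ] X)
    (hclosed : A.IsClosed)
    (P : X →L[ℂ] X)
    (hPran : LinearMap.range (P : X →ₗ[ℂ] X) = (LinearMap.ker A.toFun).map A.domain.subtype)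
    (hPker : LinearMap.ker (P : X →ₗ[ℂ] X) = LinearMap.range A.toFun)
    (hPproj : P * P = P) :
    Function.Bijective (fun x : A.domain => A x + P x) ∧
    ∃ C > (0 : ℝ), ∀ x : A.domain, ‖(x : X)‖ ≤ C * ‖A x + P x‖ := by
  have hP : IsIdempotentElem (P : X →ₗ[ℂ] X) := congrArg ContinuousLinearMap.toLinearMap hPproj
  have hbij : Function.Bijective ((P : X →ₗ[ℂ] X) +ᵥ A).toFun :=
    ⟨injective_vadd_of_isIdempotentElem hP hPran.ge hPker.ge,
      surjective_vadd_of_isIdempotentElem hP hPran.le hPker.le⟩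
  obtain ⟨C, hC, hbound⟩ := (hclosed.vadd P).exists_norm_le_of_bijective hbij
  simp only [add_comm (A _)]
  exact ⟨hbij, C, hC, hbound⟩

theorem reducibly_invertible_of_ker_range_compl
    {X : Type*} [NormedAddCommGroup X] [NormedSpace ℂ X] [CompleteSpace X]
    (A : X →ₗ.[ℂ] X)
    (hclosed : A.IsClosed)
    (hdense : Dense (A.domain : Set X))
    (hkercl : IsClosed (((LinearMap.ker A.toFun).map A.domain.subtype : Submodule ℂ X) : Set X))
    (hrancl : IsClosed ((LinearMap.range A.toFun : Submodule ℂ X) : Set X))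
    (hcompl : IsCompl ((LinearMap.ker A.toFun).map A.domain.subtype)
      (LinearMap.range A.toFun))
    (P : X →L[ℂ] X)
    (hPran : LinearMap.range (P : X →ₗ[ℂ] X) = (LinearMap.ker A.toFun).map A.domain.subtype)
    (hPker : LinearMap.ker (P : X →ₗ[ℂ] X) = LinearMap.range A.toFun)
    (hPproj : P * P = P) :
    Function.Bijective (fun x : A.domain => A x + P x) ∧
    ∃ C > (0 : ℝ), ∀ x : A.domain, ‖(x : X)‖ ≤ C * ‖A x + P x‖ :=
  reducibly_invertible_of_ker_range_compl_general A hclosed P hPran hPker hPproj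
end

section
/- If λ₀ is an isolated point of the spectrum of a bounded normal operator A on a nontrivial complex Hilbert space, then λ₀ is an eigenvalue of A. -/
theorem isolated_spectral_point_is_eigenvalue_of_normal
    {H : Type*} [NormedAddCommGroup H] [InnerProductSpace ℂ H] [CompleteSpace H]
    [Nontrivial H]
    (A : H →L[ℂ] H)
    (hA : ContinuousLinearMap.adjoint A * A = A * ContinuousLinearMap.adjoint A)
    (lam₀ : ℂ) (hmem : lam₀ ∈ spectrum ℂ A)
    (hiso : ∃ ε > (0 : ℝ), ∀ lam ∈ spectrum ℂ A, ‖lam - lam₀‖ < ε → lam = lam₀) :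
    ∃ x : H, x ≠ 0 ∧ A x = lam₀ • x := by
  have hnormal : IsStarNormal A := ⟨by rw [ContinuousLinearMap.star_eq_adjoint]; exact hA⟩
  obtain ⟨ε, hε, hiso⟩ := hiso
  set f : ℂ → ℂ := fun z => if z = lam₀ then 1 else 0 with hf
  have hcont : ContinuousOn f (spectrum ℂ A) := by
    intro z hz
    by_cases hzl : z = lam₀
    · subst hzl
      have heq : f =ᶠ[nhdsWithin z (spectrum ℂ A)] fun _ => (1 : ℂ) := by
        filter_upwards [self_mem_nhdsWithin,
          mem_nhdsWithin_of_mem_nhds (Metric.ball_mem_nhds z hε)] with w hw hwb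
        rw [Metric.mem_ball, dist_eq_norm] at hwb
        simp [f, hiso w hw hwb]
      exact (continuousWithinAt_const (b := (1:ℂ))).congr_of_eventuallyEq heq (by simp [f])
    · have : ∀ᶠ w in nhds z, f w = 0 := by
        filter_upwards [isOpen_ne.mem_nhds hzl] with w hw
        simp [f, hw]
      exact (continuousAt_const (y := (0:ℂ)).congr
        (by filter_upwards [this] with w hw; simp [hw])).continuousWithinAt
  set P := cfc f A with hP
  have hPne : P ≠ 0 := by
    intro h0
    have hsp : spectrum ℂ P = f '' spectrum ℂ A := cfc_map_spectrum f A
    have h1 : (1 : ℂ) ∈ spectrum ℂ P := by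
      rw [hsp]; exact ⟨lam₀, hmem, by simp [f]⟩
    rw [h0, spectrum.zero_eq] at h1
    exact one_ne_zero h1
  have hid : ContinuousOn (fun z : ℂ => z) (spectrum ℂ A) := continuousOn_id
  have hAP : A * P = lam₀ • P := by
    calc A * P = cfc (fun z : ℂ => z) A * cfc f A := by rw [cfc_id' ℂ A]
    _ = cfc (fun z : ℂ => z * f z) A := (cfc_mul _ _ A hid hcont).symm
    _ = cfc (fun z : ℂ => lam₀ * f z) A := by
          congr 1; funext z
          by_cases hzl : z = lam₀ <;> simp [f, hzl]
    _ = lam₀ • P := cfc_const_mul lam₀ f A hcont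
  obtain ⟨y, hy⟩ : ∃ y, P y ≠ 0 := by
    by_contra h
    push_neg at h
    exact hPne (ContinuousLinearMap.ext fun y => by simp [h y])
  refine ⟨P y, hy, ?_⟩
  have := congrFun (congrArg DFunLike.coe hAP) y
  simpa using this
end

section
/- Let A be a closed linear operator with dense domain in a complex Banach space X such that X = ker A ⊕ range A with both subspaces closed. Then 0 is either a regular point of A or an isolated point of the spectrum of A; in particular, if ker A ≠ {0}, there is a punctured neighborhood of 0 in ℂ consisting of regular points of A. -/
set_option maxHeartbeats 1000000
set_option synthInstance.maxHeartbeats 400000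


theorem aux_proj {X : Type*} [NormedAddCommGroup X] [NormedSpace ℂ X] [CompleteSpace X]
    (K R' : Submodule ℂ X) (hK : IsClosed (K : Set X)) (hR : IsClosed (R' : Set X))
    (hcompl : IsCompl K R') :
    ∃ (P : X →L[ℂ] K) (Q : X →L[ℂ] R'),
      (∀ x : X, (P x : X) + (Q x : X) = x) ∧
      (∀ k : K, P (k : X) = k ∧ Q (k : X) = 0) ∧
      (∀ r : R', P (r : X) = 0 ∧ Q (r : X) = r) := by
  haveI : CompleteSpace K := hK.completeSpace_coe
  haveI : CompleteSpace R' := hR.completeSpace_coe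
  let e0 : (K × R') ≃ₗ[ℂ] X := Submodule.prodEquivOfIsCompl K R' hcompl
  have hcont : Continuous e0 := by
    have : ⇑e0 = fun p : K × R' => (p.1 : X) + (p.2 : X) := by
      funext p
      exact Submodule.coe_prodEquivOfIsCompl' K R' hcompl p
    rw [this]
    fun_prop
  let e : (K × R') ≃L[ℂ] X := LinearEquiv.toContinuousLinearEquivOfContinuous e0 hcont
  refine ⟨(ContinuousLinearMap.fst ℂ K R').comp (e.symm : X →L[ℂ] (K × R')),
    (ContinuousLinearMap.snd ℂ K R').comp (e.symm : X →L[ℂ] (K × R')), ?_, ?_, ?_⟩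
  · intro x
    have h1 : e (e.symm x) = x := e.apply_symm_apply x
    have h2 : e (e.symm x) = ((e.symm x).1 : X) + ((e.symm x).2 : X) := by
      have := Submodule.coe_prodEquivOfIsCompl' K R' hcompl (e.symm x)
      exact this
    simpa [ContinuousLinearMap.comp_apply] using h2.symm.trans h1
  · intro k
    have : e0.symm (k : X) = (k, 0) :=
      Submodule.prodEquivOfIsCompl_symm_apply_left K R' hcompl k
    have he : e.symm (k : X) = (k, 0) := this
    constructor <;> simp [ContinuousLinearMap.comp_apply, he]
  · intro r
    have : e0.symm (r : X) = (0, r) :=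
      Submodule.prodEquivOfIsCompl_symm_apply_right K R' hcompl r
    have he : e.symm (r : X) = (0, r) := this
    constructor <;> simp [ContinuousLinearMap.comp_apply, he]


theorem aux_B {X : Type*} [NormedAddCommGroup X] [NormedSpace ℂ X] [CompleteSpace X]
    (A : X →ₗ.[ℂ] X)
    (hclosed : A.IsClosed)
    (hrancl : IsClosed ((LinearMap.range A.toFun : Submodule ℂ X) : Set X))
    (hcompl : IsCompl ((LinearMap.ker A.toFun).map A.domain.subtype) (LinearMap.range A.toFun))
    (Q : X →L[ℂ] (LinearMap.range A.toFun))
    (hQ : ∀ x : X, x - (Q x : X) ∈ (LinearMap.ker A.toFun).map A.domain.subtype) :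
    ∃ B : (LinearMap.range A.toFun) →L[ℂ] (LinearMap.range A.toFun),
      ∀ y : (LinearMap.range A.toFun),
        ∃ h : ((B y : X)) ∈ A.domain, A.toFun ⟨(B y : X), h⟩ = (y : X) := by
  haveI : CompleteSpace (LinearMap.range A.toFun) := hrancl.completeSpace_coe
  -- elements of K are in the domain and map to 0
  have hKmem : ∀ w : X, w ∈ (LinearMap.ker A.toFun).map A.domain.subtype →
      ∃ h : w ∈ A.domain, A.toFun ⟨w, h⟩ = 0 := by
    intro w hw
    rcases hw with ⟨k, hk, rfl⟩
    exact ⟨(k : A.domain).2, by simpa using hk⟩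
  -- the "solution" function
  have hex : ∀ y : LinearMap.range A.toFun, ∃ r : LinearMap.range A.toFun,
      ∃ h : (r : X) ∈ A.domain, A.toFun ⟨(r : X), h⟩ = (y : X) := by
    intro y
    rcases y.2 with ⟨x, hx⟩
    obtain ⟨hmem, hzero⟩ := hKmem ((x : X) - (Q (x : X) : X)) (hQ (x : X))
    have hrd : ((Q (x : X) : X)) ∈ A.domain := by
      have h' : ((Q (x : X) : X)) = (x : X) - ((x : X) - (Q (x : X) : X)) :=
        (sub_sub_cancel _ _).symm
      rw [h']; exact sub_mem x.2 hmem
    refine ⟨Q (x : X), hrd, ?_⟩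
    have hsub : (⟨(Q (x : X) : X), hrd⟩ : A.domain)
        = x - ⟨(x : X) - (Q (x : X) : X), hmem⟩ := by apply Subtype.ext; simp
    rw [hsub, map_sub, hzero, sub_zero, hx]
  -- uniqueness
  have huniq : ∀ (w₁ w₂ : LinearMap.range A.toFun) (h₁ : (w₁ : X) ∈ A.domain)
      (h₂ : (w₂ : X) ∈ A.domain),
      A.toFun ⟨(w₁ : X), h₁⟩ = A.toFun ⟨(w₂ : X), h₂⟩ → w₁ = w₂ := by
    intro w₁ w₂ h₁ h₂ heq
    have hmemK : ((w₁ : X) - (w₂ : X)) ∈ (LinearMap.ker A.toFun).map A.domain.subtype := by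
      refine ⟨⟨(w₁ : X) - (w₂ : X), sub_mem h₁ h₂⟩, ?_, rfl⟩
      have hsub : (⟨(w₁ : X) - (w₂ : X), sub_mem h₁ h₂⟩ : A.domain)
          = ⟨(w₁ : X), h₁⟩ - ⟨(w₂ : X), h₂⟩ := by apply Subtype.ext; simp
      simp [LinearMap.mem_ker, hsub, map_sub, heq]
    have hmemR : ((w₁ : X) - (w₂ : X)) ∈ LinearMap.range A.toFun := sub_mem w₁.2 w₂.2
    have hz : ((w₁ : X) - (w₂ : X)) = 0 := by
      have hd := hcompl.disjoint
      rw [Submodule.disjoint_def] at hd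
      exact hd _ hmemK hmemR
    exact Subtype.ext (sub_eq_zero.mp hz)
  classical
  choose b hbD hbA using hex
  -- b is linear
  have hb_add : ∀ y z : LinearMap.range A.toFun, b (y + z) = b y + b z := by
    intro y z
    have hD : ((b y + b z : LinearMap.range A.toFun) : X) ∈ A.domain := by
      push_cast; exact add_mem (hbD y) (hbD z)
    apply huniq _ _ (hbD _) hD
    rw [hbA]
    have hsub : (⟨((b y + b z : LinearMap.range A.toFun) : X), hD⟩ : A.domain)
        = ⟨(b y : X), hbD y⟩ + ⟨(b z : X), hbD z⟩ := by apply Subtype.ext; simp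
    rw [hsub, map_add, hbA, hbA]; push_cast; ring
  have hb_smul : ∀ (c : ℂ) (y : LinearMap.range A.toFun), b (c • y) = c • b y := by
    intro c y
    have hD : ((c • b y : LinearMap.range A.toFun) : X) ∈ A.domain := by
      push_cast; exact Submodule.smul_mem _ _ (hbD y)
    apply huniq _ _ (hbD _) hD
    rw [hbA]
    have hsub : (⟨((c • b y : LinearMap.range A.toFun) : X), hD⟩ : A.domain)
        = c • (⟨(b y : X), hbD y⟩ : A.domain) := by apply Subtype.ext; simp
    rw [hsub, map_smul, hbA]; push_cast; ring
  let B₀ : LinearMap.range A.toFun →ₗ[ℂ] LinearMap.range A.toFun :=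
    { toFun := b, map_add' := hb_add, map_smul' := hb_smul }
  -- continuity by the closed graph theorem
  have hgraph : IsClosed (B₀.graph : Set ((LinearMap.range A.toFun) × (LinearMap.range A.toFun))) := by
    have hset : (B₀.graph : Set ((LinearMap.range A.toFun) × (LinearMap.range A.toFun)))
        = (fun p : (LinearMap.range A.toFun) × (LinearMap.range A.toFun) =>
            (((p.2 : X)), ((p.1 : X)))) ⁻¹' (A.graph : Set (X × X)) := by
      ext p
      simp only [SetLike.mem_coe, LinearMap.mem_graph_iff, Set.mem_preimage,
        LinearPMap.mem_graph_iff]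
      constructor
      · intro h
        refine ⟨⟨(b p.1 : X), hbD p.1⟩, ?_, hbA p.1⟩
        simp only []
        exact congrArg (Subtype.val) h.symm
      · rintro ⟨z, hz1, hz2⟩
        have hD : ((p.2 : X)) ∈ A.domain := hz1 ▸ z.2
        have hval : A.toFun ⟨(p.2 : X), hD⟩ = (p.1 : X) := by
          have hze : z = ⟨(p.2 : X), hD⟩ := Subtype.ext hz1
          rw [← hze]; exact hz2
        exact (huniq p.2 (b p.1) hD (hbD p.1) (by rw [hval, hbA]))
    rw [hset]
    exact hclosed.preimage (by fun_prop)
  have hcont : Continuous B₀ := B₀.continuous_of_isClosed_graph hgraph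
  exact ⟨⟨B₀, hcont⟩, fun y => ⟨hbD y, hbA y⟩⟩



theorem aux_main
    {X : Type*} [NormedAddCommGroup X] [NormedSpace ℂ X] [CompleteSpace X]
    (A : X →ₗ.[ℂ] X)
    (hclosed : A.IsClosed)
    (hdense : Dense (A.domain : Set X))
    (hkercl : IsClosed (((LinearMap.ker A.toFun).map A.domain.subtype : Submodule ℂ X) : Set X))
    (hrancl : IsClosed ((LinearMap.range A.toFun : Submodule ℂ X) : Set X))
    (hcompl : IsCompl ((LinearMap.ker A.toFun).map A.domain.subtype)
      (LinearMap.range A.toFun))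
    -- projections
    (P : X →L[ℂ] ((LinearMap.ker A.toFun).map A.domain.subtype))
    (Q : X →L[ℂ] (LinearMap.range A.toFun))
    (hPQ : ∀ x : X, (P x : X) + (Q x : X) = x)
    (hK0 : ∀ k : ((LinearMap.ker A.toFun).map A.domain.subtype), P (k : X) = k ∧ Q (k : X) = 0)
    (hR0 : ∀ r : (LinearMap.range A.toFun), P (r : X) = 0 ∧ Q (r : X) = r)
    -- right inverse
    (B : (LinearMap.range A.toFun) →L[ℂ] (LinearMap.range A.toFun))
    (hB : ∀ y : (LinearMap.range A.toFun),
        ∃ h : ((B y : X)) ∈ A.domain, A.toFun ⟨(B y : X), h⟩ = (y : X)) :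
    ∃ ε > (0 : ℝ), ∀ lam : ℂ, lam ≠ 0 → ‖lam‖ < ε →
      Function.Bijective (fun x : A.domain => A x - lam • (x : X)) ∧
      ∃ C > (0 : ℝ), ∀ x : A.domain, ‖(x : X)‖ ≤ C * ‖A x - lam • (x : X)‖ := by
  classical
  haveI : CompleteSpace (LinearMap.range A.toFun) := hrancl.completeSpace_coe
  -- elements of K are in the domain and map to 0
  have hKmem : ∀ w : X, w ∈ (LinearMap.ker A.toFun).map A.domain.subtype →
      ∃ h : w ∈ A.domain, A.toFun ⟨w, h⟩ = 0 := by
    intro w hw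
    rcases hw with ⟨k, hk, rfl⟩
    exact ⟨(k : A.domain).2, by simpa using hk⟩
  -- uniqueness of preimages within the range
  have huniq : ∀ (w₁ w₂ : LinearMap.range A.toFun) (h₁ : (w₁ : X) ∈ A.domain)
      (h₂ : (w₂ : X) ∈ A.domain),
      A.toFun ⟨(w₁ : X), h₁⟩ = A.toFun ⟨(w₂ : X), h₂⟩ → w₁ = w₂ := by
    intro w₁ w₂ h₁ h₂ heq
    have hmemK : ((w₁ : X) - (w₂ : X)) ∈ (LinearMap.ker A.toFun).map A.domain.subtype := by
      refine ⟨⟨(w₁ : X) - (w₂ : X), sub_mem h₁ h₂⟩, ?_, rfl⟩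
      have hsub : (⟨(w₁ : X) - (w₂ : X), sub_mem h₁ h₂⟩ : A.domain)
          = ⟨(w₁ : X), h₁⟩ - ⟨(w₂ : X), h₂⟩ := by apply Subtype.ext; simp
      simp [LinearMap.mem_ker, hsub, map_sub, heq]
    have hmemR : ((w₁ : X) - (w₂ : X)) ∈ LinearMap.range A.toFun := sub_mem w₁.2 w₂.2
    have hz : ((w₁ : X) - (w₂ : X)) = 0 := by
      have hd := hcompl.disjoint
      rw [Submodule.disjoint_def] at hd
      exact hd _ hmemK hmemR
    exact Subtype.ext (sub_eq_zero.mp hz)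
  refine ⟨(‖B‖ + 1)⁻¹, by positivity, ?_⟩
  intro lam hlam hlamnorm
  have hBnn : (0:ℝ) ≤ ‖B‖ := ContinuousLinearMap.opNorm_nonneg _
  have hnorm : ‖lam • B‖ < 1 := by
    calc ‖lam • B‖ ≤ ‖lam‖ * ‖B‖ := ContinuousLinearMap.opNorm_smul_le _ _
    _ < (‖B‖ + 1)⁻¹ * (‖B‖ + 1) := by
        rcases eq_or_lt_of_le hBnn with h0 | h0
        · rw [← h0]; simpa using by positivity
        · exact mul_lt_mul'' hlamnorm (by linarith) (norm_nonneg _) hBnn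
    _ = 1 := inv_mul_cancel₀ (by positivity)
  set u : ((LinearMap.range A.toFun) →L[ℂ] (LinearMap.range A.toFun))ˣ :=
    Units.oneSub (lam • B) hnorm with hudef
  set S : (LinearMap.range A.toFun) →L[ℂ] (LinearMap.range A.toFun) :=
    (↑u⁻¹ : (LinearMap.range A.toFun) →L[ℂ] (LinearMap.range A.toFun)).comp B with hSdef
  have huval : ∀ w, u.val w = w - lam • B w := by
    intro w
    have h : u.val = 1 - lam • B := rfl
    rw [h, ContinuousLinearMap.sub_apply, ContinuousLinearMap.one_apply,
      ContinuousLinearMap.smul_apply]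
  have hSz : ∀ z, S z = u.inv (B z) := fun z => rfl
  have hSfix : ∀ z, S z - lam • B (S z) = B z := by
    intro z
    have h1 : u.val (u.inv (B z)) = B z := by
      calc u.val (u.inv (B z)) = (u.val * u.inv) (B z) := rfl
      _ = B z := by rw [u.val_inv]; rfl
    rw [hSz z, ← huval]
    exact h1
  have hS_spec : ∀ z, ∃ h : ((S z : X)) ∈ A.domain,
      A.toFun ⟨(S z : X), h⟩ - lam • ((S z : X)) = (z : X) := by
    intro z
    have hfix : S z = B (z + lam • S z) := by
      have h2 : B (z + lam • S z) = B z + lam • B (S z) := by rw [map_add, map_smul]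
      rw [h2, ← hSfix z]; abel
    obtain ⟨hD, hA⟩ := hB (z + lam • S z)
    have hcoe : ((S z : X)) = ((B (z + lam • S z) : X)) := congrArg _ hfix
    have hD' : ((S z : X)) ∈ A.domain := by rw [hcoe]; exact hD
    refine ⟨hD', ?_⟩
    have hsub : (⟨(S z : X), hD'⟩ : A.domain) = ⟨(B (z + lam • S z) : X), hD⟩ :=
      Subtype.ext hcoe
    rw [hsub, hA, hcoe]
    push_cast
    rw [← hcoe]
    abel
  have hS_uniq : ∀ (z : LinearMap.range A.toFun) (w : LinearMap.range A.toFun)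
      (hwD : (w : X) ∈ A.domain),
      A.toFun ⟨(w : X), hwD⟩ - lam • (w : X) = (z : X) → w = S z := by
    intro z w hwD heq
    have hAw : A.toFun ⟨(w : X), hwD⟩ = ((z + lam • w : LinearMap.range A.toFun) : X) := by
      push_cast; rw [← heq]; abel
    obtain ⟨hD, hA⟩ := hB (z + lam • w)
    have hwB : w = B (z + lam • w) := huniq w _ hwD hD (by rw [hAw, hA])
    have hfix : u.val w = B z := by
      rw [huval]
      calc w - lam • B w = B (z + lam • w) - lam • B w := by rw [← hwB]
      _ = B z + lam • B w - lam • B w := by rw [map_add, map_smul]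
      _ = B z := by abel
    calc w = u.inv (u.val w) := by
          rw [show u.inv (u.val w) = (u.inv * u.val) w from rfl, u.inv_val]; rfl
    _ = u.inv (B z) := by rw [hfix]
    _ = S z := (hSz z).symm
  -- the inverse function
  set g : X → X := fun y => (-(lam⁻¹)) • ((P y : X)) + ((S (Q y) : X)) with hgdef
  have hgD : ∀ y : X, g y ∈ A.domain := by
    intro y
    obtain ⟨hPmem, _⟩ := hKmem _ (P y).2
    obtain ⟨hSmem, _⟩ := hS_spec (Q y)
    exact add_mem (Submodule.smul_mem _ _ hPmem) hSmem
  -- right inverse identity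
  have hgT : ∀ y : X, A.toFun ⟨g y, hgD y⟩ - lam • g y = y := by
    intro y
    obtain ⟨hPmem, hPzero⟩ := hKmem _ (P y).2
    obtain ⟨hSmem, hSval⟩ := hS_spec (Q y)
    have hsub : (⟨g y, hgD y⟩ : A.domain)
        = (-(lam⁻¹)) • (⟨(P y : X), hPmem⟩ : A.domain) + ⟨(S (Q y) : X), hSmem⟩ := by
      apply Subtype.ext; simp [hgdef]
    rw [hsub, map_add, map_smul, hPzero, smul_zero, zero_add]
    have hgy : g y = (-(lam⁻¹)) • ((P y : X)) + ((S (Q y) : X)) := rfl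
    have hexpand : lam • g y = -((P y : X)) + lam • ((S (Q y) : X)) := by
      rw [hgy]
      simp only [smul_add, smul_smul, smul_neg, mul_neg, mul_inv_cancel₀ hlam]
      simp
    have : A.toFun ⟨(S (Q y) : X), hSmem⟩ = ((Q y : X)) + lam • ((S (Q y) : X)) := by
      rw [← hSval]; abel
    rw [this, hexpand]
    conv_rhs => rw [← hPQ y]
    abel
  -- left inverse identity
  have hleft : ∀ x : A.domain, g (A.toFun x - lam • (x : X)) = (x : X) := by
    intro x
    obtain ⟨hkD, hkzero⟩ := hKmem _ (P (x : X)).2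
    have hrD : ((Q (x : X) : X)) ∈ A.domain := by
      have h' : ((Q (x : X) : X)) = (x : X) - ((P (x : X)) : X) := by
        rw [eq_sub_iff_add_eq, add_comm]
        exact hPQ (x : X)
      rw [h']; exact sub_mem x.2 hkD
    set xr : A.domain := ⟨(Q (x : X) : X), hrD⟩ with hxrdef
    have hxsplit : x = (⟨((P (x : X)) : X), hkD⟩ : A.domain) + xr := by
      apply Subtype.ext; push_cast; rw [hPQ (x : X)]
    have hAx : A.toFun x = A.toFun xr := by
      rw [hxsplit, map_add, hkzero, zero_add]
    set r' : LinearMap.range A.toFun :=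
      ⟨A.toFun xr, LinearMap.mem_range_self _ xr⟩ - lam • Q (x : X) with hr'def
    set k' : ((LinearMap.ker A.toFun).map A.domain.subtype) := (-lam) • P (x : X) with hk'def
    have hy : A.toFun x - lam • (x : X) = (k' : X) + (r' : X) := by
      have h1 : (k' : X) + (r' : X)
          = A.toFun xr - lam • (((P (x : X)) : X) + ((Q (x : X)) : X)) := by
        rw [hk'def, hr'def]
        push_cast
        simp only [smul_add]
        module
      rw [hAx, h1, hPQ (x : X)]
    have hPy : P (A.toFun x - lam • (x : X)) = k' := by
      rw [hy, map_add]
      rw [(hK0 k').1, (hR0 r').1, add_zero]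
    have hQy : Q (A.toFun x - lam • (x : X)) = r' := by
      rw [hy, map_add]
      rw [(hK0 k').2, (hR0 r').2, zero_add]
    have hSr' : S r' = Q (x : X) := by
      refine (hS_uniq r' (Q (x : X)) hrD ?_).symm
      rw [hr'def]; push_cast
      rfl
    have hgy : g (A.toFun x - lam • (x : X))
        = (-(lam⁻¹)) • ((P (A.toFun x - lam • (x : X)) : X))
          + ((S (Q (A.toFun x - lam • (x : X))) : X)) := rfl
    rw [hgy, hPy, hQy, hSr', hk'def]
    push_cast
    have hone : -lam⁻¹ * -lam = 1 := by field_simp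
    rw [smul_smul, hone, one_smul]
    exact hPQ (x : X)
  -- the bound
  set C : ℝ := ‖lam⁻¹‖ * ‖P‖ + ‖S‖ * ‖Q‖ + 1 with hCdef
  have hCpos : (0:ℝ) < C := by positivity
  have hbound : ∀ y : X, ‖g y‖ ≤ C * ‖y‖ := by
    intro y
    have h1 : ‖g y‖ ≤ ‖(-(lam⁻¹)) • ((P y : X))‖ + ‖((S (Q y) : X))‖ := norm_add_le _ _
    have h2 : ‖(-(lam⁻¹)) • ((P y : X))‖ = ‖lam⁻¹‖ * ‖P y‖ := by
      rw [norm_smul, norm_neg]; rfl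
    have h3 : ‖((S (Q y) : X))‖ = ‖S (Q y)‖ := rfl
    have h4 : ‖P y‖ ≤ ‖P‖ * ‖y‖ := P.le_opNorm y
    have h5 : ‖S (Q y)‖ ≤ ‖S‖ * ‖Q y‖ := S.le_opNorm _
    have h6 : ‖Q y‖ ≤ ‖Q‖ * ‖y‖ := Q.le_opNorm y
    have hyn : (0:ℝ) ≤ ‖y‖ := norm_nonneg _
    have hSn : (0:ℝ) ≤ ‖S‖ := ContinuousLinearMap.opNorm_nonneg _
    have hln : (0:ℝ) ≤ ‖lam⁻¹‖ := norm_nonneg _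
    calc ‖g y‖ ≤ ‖lam⁻¹‖ * ‖P y‖ + ‖S (Q y)‖ := by rw [← h2, ← h3]; exact h1
    _ ≤ ‖lam⁻¹‖ * (‖P‖ * ‖y‖) + ‖S‖ * (‖Q‖ * ‖y‖) :=
        add_le_add (mul_le_mul_of_nonneg_left h4 hln)
          (h5.trans (mul_le_mul_of_nonneg_left h6 hSn))
    _ = (‖lam⁻¹‖ * ‖P‖ + ‖S‖ * ‖Q‖) * ‖y‖ := by ring
    _ ≤ C * ‖y‖ := by
        rw [hCdef]
        exact mul_le_mul_of_nonneg_right (by linarith) hyn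
  -- conclusion
  have happ : ∀ x : A.domain, A x = A.toFun x := fun x => rfl
  refine ⟨⟨?_, ?_⟩, C, hCpos, ?_⟩
  · intro x₁ x₂ h
    simp only [happ] at h
    apply Subtype.coe_injective
    show (x₁ : X) = (x₂ : X)
    rw [← hleft x₁, ← hleft x₂, h]
  · intro y
    refine ⟨⟨g y, hgD y⟩, ?_⟩
    simpa using hgT y
  · intro x
    calc ‖(x : X)‖ = ‖g (A.toFun x - lam • (x : X))‖ := by rw [hleft x]
    _ ≤ C * ‖A.toFun x - lam • (x : X)‖ := hbound _
    _ = C * ‖A x - lam • (x : X)‖ := rfl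

theorem zero_regular_or_isolated_of_ker_range_compl
    {X : Type*} [NormedAddCommGroup X] [NormedSpace ℂ X] [CompleteSpace X]
    (A : X →ₗ.[ℂ] X)
    (hclosed : A.IsClosed)
    (hdense : Dense (A.domain : Set X))
    (hkercl : IsClosed (((LinearMap.ker A.toFun).map A.domain.subtype : Submodule ℂ X) : Set X))
    (hrancl : IsClosed ((LinearMap.range A.toFun : Submodule ℂ X) : Set X))
    (hcompl : IsCompl ((LinearMap.ker A.toFun).map A.domain.subtype)
      (LinearMap.range A.toFun)) :
    ∃ ε > (0 : ℝ), ∀ lam : ℂ, lam ≠ 0 → ‖lam‖ < ε →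
      Function.Bijective (fun x : A.domain => A x - lam • (x : X)) ∧
      ∃ C > (0 : ℝ), ∀ x : A.domain, ‖(x : X)‖ ≤ C * ‖A x - lam • (x : X)‖ := by
  obtain ⟨P, Q, hPQ, hK0, hR0⟩ := aux_proj ((LinearMap.ker A.toFun).map A.domain.subtype)
    (LinearMap.range A.toFun) hkercl hrancl hcompl
  have hQ : ∀ x : X, x - (Q x : X) ∈ (LinearMap.ker A.toFun).map A.domain.subtype := by
    intro x
    have h' : x - ((Q x : X)) = ((P x : X)) := by
      rw [sub_eq_iff_eq_add]
      exact (hPQ x).symm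
    rw [h']
    exact (P x).2
  obtain ⟨B, hB⟩ := aux_B A hclosed hrancl hcompl Q hQ
  exact aux_main A hclosed hdense hkercl hrancl hcompl P Q hPQ hK0 hR0 B hB
end
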